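/- Let A ⊆ ℕ. (1) If 𝔉 is a syndetic, idempotent filter with A ∈ 𝔉, then the set B := A ∩ (A − 𝔉) satisfies: for every finite subset F ⊆ B, the set B ∩ ⋂_{f ∈ F} (B − f) is syndetic. (2) Conversely, if A satisfies that for every finite subset F ⊆ A the set A ∩ ⋂_{f ∈ F} (A − f) is syndetic, then the upward closure of the collection {A ∩ ⋂_{f ∈ F} (A − f) | F ⊆ A finite} is a syndetic, idempotent filter containing A. In particular, A belongs to a syndetic, idempotent filter if and only if some subset B ⊆ A satisfies: for every finite F ⊆ B, the set B ∩ ⋂_{f ∈ F} (B − f) is syndetic. -/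

import Mathlib

open Set

/-- `A − n` computed inside the positive integers. -/
def shiftN (A : Set ℕ+) (n : ℕ+) : Set ℕ+ := {m : ℕ+ | m + n ∈ A}

/-- `A − B := ⋃_{b ∈ B} (A − b)`. -/
def shiftSet (A B : Set ℕ+) : Set ℕ+ := ⋃ b ∈ B, shiftN A b

/-- A set of positive integers is syndetic if `A ∪ (A−1) ∪ ⋯ ∪ (A−N) = ℕ` for some `N`. -/
def Syndetic (A : Set ℕ+) : Prop :=
  ∃ N : ℕ+, (A ∪ ⋃ k ∈ {k : ℕ+ | k ≤ N}, shiftN A k) = Set.univ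

/-- A set of positive integers is thick if it contains a translate of every finite set. -/
def Thick (A : Set ℕ+) : Prop :=
  ∀ F : Finset ℕ+, ∃ n : ℕ+, ∀ f ∈ F, f + n ∈ A

/-- Piecewise syndetic: some finite union of translates `A ∪ (A−1) ∪ ⋯ ∪ (A−N)` is thick. -/
def PiecewiseSyndetic (A : Set ℕ+) : Prop :=
  ∃ N : ℕ+, Thick (A ∪ ⋃ k ∈ {k : ℕ+ | k ≤ N}, shiftN A k)

/-- A self-map of a topological space is minimal if every forward orbit
`{T^n x | n ∈ ℕ, n ≥ 1}` is dense. -/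
def MinimalMap {X : Type} [TopologicalSpace X] (T : X → X) : Prop :=
  ∀ x : X, Dense (Set.range fun n : ℕ+ => T^[(n : ℕ)] x)

/-- A minimal topological dynamical system: a nonempty compact metric space together with a
continuous map all of whose forward orbits are dense. -/
structure MinSystem : Type 1 where
  X : Type
  [met : MetricSpace X]
  [cpt : CompactSpace X]
  [nem : Nonempty X]
  T : X → X
  cont : Continuous T
  minimal : MinimalMap T

attribute [instance] MinSystem.met MinSystem.cpt MinSystem.nem

/-- `R(x,U)`: the set of (positive) return times of `x` to `U`. -/
def retTimes {X : Type} (T : X → X) (x : X) (U : Set X) : Set ℕ+ :=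
  {n : ℕ+ | T^[(n : ℕ)] x ∈ U}

/-- Dynamically syndetic sets. -/
def DynSyndetic (A : Set ℕ+) : Prop :=
  ∃ (S : MinSystem) (x : S.X) (U : Set S.X),
    IsOpen U ∧ U.Nonempty ∧ retTimes S.T x U ⊆ A

/-- Dynamically central syndetic sets. -/
def DynCentralSyndetic (A : Set ℕ+) : Prop :=
  ∃ (S : MinSystem) (x : S.X) (U : Set S.X),
    IsOpen U ∧ x ∈ U ∧ retTimes S.T x U ⊆ A

/-- Dynamically thick sets: `{T^n x | n ∈ A}` is dense for every minimal system and point. -/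
def DynThick (A : Set ℕ+) : Prop :=
  ∀ (S : MinSystem) (x : S.X), Dense ((fun n : ℕ+ => S.T^[(n : ℕ)] x) '' A)

/-- Sets of (minimal topological) pointwise recurrence. -/
def PointwiseRecurrent (A : Set ℕ+) : Prop :=
  ∀ (S : MinSystem) (x : S.X) (U : Set S.X), IsOpen U → x ∈ U →
    ∃ a ∈ A, S.T^[(a : ℕ)] x ∈ U

/-- A family: an upward-closed collection of subsets of the positive integers. -/
def UpwardClosed (F : Set (Set ℕ+)) : Prop :=
  ∀ ⦃A B : Set ℕ+⦄, A ∈ F → A ⊆ B → B ∈ F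

/-- A filter (in the combinatorial sense): an upward-closed collection closed under
finite intersections. -/
def IsFilterFamily (F : Set (Set ℕ+)) : Prop :=
  UpwardClosed F ∧ ∀ ⦃A B : Set ℕ+⦄, A ∈ F → B ∈ F → A ∩ B ∈ F

/-- A family all of whose members are syndetic. -/
def SyndeticFamily (F : Set (Set ℕ+)) : Prop := ∀ A ∈ F, Syndetic A

/-- `A − 𝔉 := {n | A − n ∈ 𝔉}`. -/
def famShift (A : Set ℕ+) (F : Set (Set ℕ+)) : Set ℕ+ := {n : ℕ+ | shiftN A n ∈ F}

/-- `𝔉 + 𝔊 := {A | A − 𝔊 ∈ 𝔉}`. -/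
def famSum (F G : Set (Set ℕ+)) : Set (Set ℕ+) := {A : Set ℕ+ | famShift A G ∈ F}

/-- A family is idempotent if `𝔉 ⊆ 𝔉 + 𝔉`. -/
def IdempotentFamily (F : Set (Set ℕ+)) : Prop := F ⊆ famSum F F

/-- A proper family: nonempty and not containing the empty set. -/
def ProperFamily (F : Set (Set ℕ+)) : Prop := F.Nonempty ∧ ∅ ∉ F

/-- The upward closure of a collection of subsets of `ℕ`. -/
def upClose (C : Set (Set ℕ+)) : Set (Set ℕ+) := {B | ∃ A ∈ C, A ⊆ B}

/-- The combinatorial condition: for every finite `F ⊆ B`, the set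
`B ∩ ⋂_{f ∈ F} (B − f)` is syndetic. -/
def CombCond (B : Set ℕ+) : Prop :=
  ∀ F : Finset ℕ+, (F : Set ℕ+) ⊆ B → Syndetic (B ∩ ⋂ f ∈ F, shiftN B f)

/-- The upward closure of `{A ∩ ⋂_{f ∈ F} (A − f) | F ⊆ A finite}`. -/
def genFam (A : Set ℕ+) : Set (Set ℕ+) :=
  upClose {S | ∃ F : Finset ℕ+, (F : Set ℕ+) ⊆ A ∧ S = A ∩ ⋂ f ∈ F, shiftN A f}

/-!
If `𝔉` is an idempotent filter containing `A`, then `A − 𝔉 ∈ 𝔉`, and since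
`(A − 𝔉) − f = (A − f) − 𝔉`, every shift `B − f` of `B = A ∩ (A − 𝔉)` by some `f ∈ B` lies in `𝔉`
again; hence so does `B ∩ ⋂_{f ∈ F} (B − f)`, which is therefore syndetic.

Conversely, the sets `A ∩ ⋂_{f ∈ F} (A − f)` are closed under intersection (take `F ∪ G`), and if
`n` lies in such a set, its shift by `n` contains the set attached to the finite subset
`{n} ∪ (n + F)` of `A`: this makes the generated filter idempotent.
-/

lemma shiftN_mono {A B : Set ℕ+} (h : A ⊆ B) (n : ℕ+) : shiftN A n ⊆ shiftN B n :=
  fun _ hm => h hm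

lemma Syndetic.mono {A B : Set ℕ+} (h : A ⊆ B) (hA : Syndetic A) : Syndetic B := by
  obtain ⟨N, hN⟩ := hA
  refine ⟨N, eq_univ_of_univ_subset ?_⟩
  rw [← hN]
  exact union_subset_union h (iUnion₂_mono fun k _ => shiftN_mono h k)

lemma shiftN_famShift (A : Set ℕ+) (𝓕 : Set (Set ℕ+)) (n : ℕ+) :
    shiftN (famShift A 𝓕) n = famShift (shiftN A n) 𝓕 := by
  ext m
  simp only [shiftN, famShift, mem_ofPred_eq, add_assoc]

lemma IsFilterFamily.inter_biInter_mem {𝓕 : Set (Set ℕ+)} (h𝓕 : IsFilterFamily 𝓕)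
    {B : Set ℕ+} (hB : B ∈ 𝓕) (g : ℕ+ → Set ℕ+) (F : Finset ℕ+) (hg : ∀ f ∈ F, g f ∈ 𝓕) :
    (B ∩ ⋂ f ∈ F, g f) ∈ 𝓕 := by
  induction F using Finset.induction with
  | empty => simpa using hB
  | insert a F _ ih =>
    have hmem : (B ∩ ⋂ f ∈ F, g f) ∩ g a ∈ 𝓕 :=
      h𝓕.2 (ih fun f hf => hg f (Finset.mem_insert_of_mem hf))
        (hg a (Finset.mem_insert_self a F))
    convert hmem using 1
    ext x
    simp only [Finset.mem_insert, mem_inter_iff, mem_iInter, forall_eq_or_imp]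
    tauto

section FilterToCombCond

variable {𝓕 : Set (Set ℕ+)} {A : Set ℕ+}

lemma inter_famShift_mem (hfil : IsFilterFamily 𝓕) (hidem : IdempotentFamily 𝓕) (hA : A ∈ 𝓕) :
    A ∩ famShift A 𝓕 ∈ 𝓕 :=
  hfil.2 hA (hidem hA)

lemma shiftN_inter_famShift_mem (hfil : IsFilterFamily 𝓕) (hidem : IdempotentFamily 𝓕) {f : ℕ+}
    (hf : f ∈ A ∩ famShift A 𝓕) :
    shiftN (A ∩ famShift A 𝓕) f ∈ 𝓕 := by
  have hAf : shiftN A f ∈ 𝓕 := hf.2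
  have hfam : shiftN (famShift A 𝓕) f ∈ 𝓕 := shiftN_famShift A 𝓕 f ▸ hidem hAf
  exact hfil.2 hAf hfam

lemma combCond_inter_famShift (hfil : IsFilterFamily 𝓕) (hidem : IdempotentFamily 𝓕)
    (hsyn : SyndeticFamily 𝓕) (hA : A ∈ 𝓕) :
    CombCond (A ∩ famShift A 𝓕) := fun F hF =>
  hsyn _ <| hfil.inter_biInter_mem (inter_famShift_mem hfil hidem hA) _ F
    fun _ hf => shiftN_inter_famShift_mem hfil hidem (hF hf)

end FilterToCombCond

def interShifts (A : Set ℕ+) (F : Finset ℕ+) : Set ℕ+ := A ∩ ⋂ f ∈ F, shiftN A f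

lemma mem_interShifts {A : Set ℕ+} {F : Finset ℕ+} {m : ℕ+} :
    m ∈ interShifts A F ↔ m ∈ A ∧ ∀ f ∈ F, m + f ∈ A := by
  simp only [interShifts, shiftN, mem_inter_iff, mem_iInter, mem_ofPred_eq]

lemma mem_genFam {A C : Set ℕ+} :
    C ∈ genFam A ↔ ∃ F : Finset ℕ+, (F : Set ℕ+) ⊆ A ∧ interShifts A F ⊆ C :=
  ⟨by rintro ⟨_, ⟨F, hF, rfl⟩, hC⟩; exact ⟨F, hF, hC⟩,
    fun ⟨F, hF, hC⟩ => ⟨_, ⟨F, hF, rfl⟩, hC⟩⟩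

lemma interShifts_union (A : Set ℕ+) (F G : Finset ℕ+) :
    interShifts A (F ∪ G) = interShifts A F ∩ interShifts A G := by
  ext m
  simp only [mem_interShifts, mem_inter_iff, Finset.mem_union]
  grind

lemma coe_insert_image_add_subset {A : Set ℕ+} {F : Finset ℕ+} {n : ℕ+}
    (hn : n ∈ interShifts A F) : ((insert n (F.image (n + ·)) : Finset ℕ+) : Set ℕ+) ⊆ A := by
  rw [mem_interShifts] at hn
  intro x hx
  simp only [Finset.coe_insert, Finset.coe_image, mem_insert_iff, mem_image,
    Finset.mem_coe] at hx
  rcases hx with rfl | ⟨f, hf, rfl⟩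
  exacts [hn.1, hn.2 f hf]

lemma interShifts_insert_image_add_subset (A : Set ℕ+) (F : Finset ℕ+) (n : ℕ+) :
    interShifts A (insert n (F.image (n + ·))) ⊆ shiftN (interShifts A F) n := by
  intro m hm
  simp only [mem_interShifts, Finset.mem_insert, Finset.mem_image, forall_eq_or_imp,
    forall_exists_index, and_imp, forall_apply_eq_imp_iff₂] at hm
  simp only [shiftN, mem_ofPred_eq, mem_interShifts, add_assoc]
  exact hm.2

lemma genFam_isFilterFamily (A : Set ℕ+) : IsFilterFamily (genFam A) := by
  refine ⟨fun C D hC hCD => ?_, fun C D hC hD => ?_⟩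
  · obtain ⟨F, hF, hFC⟩ := mem_genFam.1 hC
    exact mem_genFam.2 ⟨F, hF, hFC.trans hCD⟩
  · obtain ⟨F, hF, hFC⟩ := mem_genFam.1 hC
    obtain ⟨G, hG, hGD⟩ := mem_genFam.1 hD
    refine mem_genFam.2 ⟨F ∪ G, ?_, ?_⟩
    · rw [Finset.coe_union]
      exact union_subset hF hG
    · rw [interShifts_union]
      exact inter_subset_inter hFC hGD

lemma genFam_idempotent (A : Set ℕ+) : IdempotentFamily (genFam A) := by
  intro C hC
  obtain ⟨F, hF, hFC⟩ := mem_genFam.1 hC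
  refine mem_genFam.2 ⟨F, hF, fun n hn => mem_genFam.2 ?_⟩
  exact ⟨_, coe_insert_image_add_subset hn,
    (interShifts_insert_image_add_subset A F n).trans (shiftN_mono hFC n)⟩

lemma self_mem_genFam (A : Set ℕ+) : A ∈ genFam A :=
  mem_genFam.2 ⟨∅, by simp, inter_subset_left⟩

lemma CombCond.syndeticFamily_genFam {A : Set ℕ+} (hA : CombCond A) :
    SyndeticFamily (genFam A) := fun _ hC =>
  let ⟨F, hF, hFC⟩ := mem_genFam.1 hC
  (hA F hF).mono hFC

/-- **Theorem (combinatorial characterization of membership in syndetic idempotent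
filters).**
(1) If `𝔉` is a syndetic, idempotent filter with `A ∈ 𝔉`, then `A ∩ (A − 𝔉)` satisfies the
combinatorial condition.
(2) If `A` satisfies the combinatorial condition, then the upward closure of
`{A ∩ ⋂_{f ∈ F} (A − f) | F ⊆ A finite}` is a syndetic, idempotent filter containing `A`.
In particular, `A` belongs to a syndetic idempotent filter iff some `B ⊆ A` satisfies the
combinatorial condition. -/
theorem combCond_syndetic_idempotent_filter (A : Set ℕ+) :
    (∀ 𝓕 : Set (Set ℕ+), IsFilterFamily 𝓕 → SyndeticFamily 𝓕 → IdempotentFamily 𝓕 →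
      A ∈ 𝓕 → CombCond (A ∩ famShift A 𝓕)) ∧
    (CombCond A →
      IsFilterFamily (genFam A) ∧ SyndeticFamily (genFam A) ∧
        IdempotentFamily (genFam A) ∧ A ∈ genFam A) ∧
    ((∃ 𝓕 : Set (Set ℕ+), IsFilterFamily 𝓕 ∧ SyndeticFamily 𝓕 ∧ IdempotentFamily 𝓕 ∧
        A ∈ 𝓕) ↔
      ∃ B : Set ℕ+, B ⊆ A ∧ CombCond B) := by
  refine ⟨fun 𝓕 hfil hsyn hidem hA => combCond_inter_famShift hfil hidem hsyn hA,
    fun hA => ⟨genFam_isFilterFamily A, hA.syndeticFamily_genFam, genFam_idempotent A,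
      self_mem_genFam A⟩, ?_⟩
  constructor
  · rintro ⟨𝓕, hfil, hsyn, hidem, hA⟩
    exact ⟨_, inter_subset_left, combCond_inter_famShift hfil hidem hsyn hA⟩
  · rintro ⟨B, hBA, hB⟩
    exact ⟨genFam B, genFam_isFilterFamily B, hB.syndeticFamily_genFam, genFam_idempotent B,
      (genFam_isFilterFamily B).1 (self_mem_genFam B) hBA⟩
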